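/- arXiv:0804.2345 — 6 statements merged into one kernel-verified Lean document; each statement's English description precedes it below -/
import Mathlib

section
/- Let (X, 𝔉, P) be a probability space and let T, S : X → X be measurable maps that preserve P (i.e., P∘T⁻¹ = P and P∘S⁻¹ = P). Then for every bounded measurable f : X → ℝ, for P-almost every x ∈ X the Birkhoff limits f_*(x) := lim_{n→∞} (1/n) ∑_{i=1}^{n} f(Sⁱ x) and f_{**}(x) := lim_{n→∞} (1/n) ∑_{j=1}^{n} f_*(Tʲ x) exist, and the double Cesàro average (1/n) ∑_{j=1}^{n} (1/n) ∑_{i=1}^{n} f(Sⁱ Tʲ x) converges to f_{**}(x) as n → ∞. -/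
/-!
Birkhoff's theorem for a bounded measurable `f` is proved from the maximal ergodic theorem
(Garsia's argument), the limit being realized as the limsup of the averages: if the liminf and
the limsup of the averages were separated by `a < b` on a set `E` of positive measure, then `E`
would be invariant and the maximal ergodic theorem would give `b μ(E) ≤ ∫_E f ≤ a μ(E)`.

Applied to `S` and then to `T` this yields `f_*` and `f_**`. The inner averages are `f_* + u_n`
with `u_n → 0` a.e., so the double average is the `T`-average of `f_*`, which tends to `f_**`,
plus the `n`-th `T`-average of `u_n`. For `n ≥ N` the latter is dominated by the `T`-average of
`H_N = sup_{m ≥ N} |u_m|`, whose Birkhoff limit has integral `∫ H_N → 0`; along a subsequence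
these limits tend to `0` a.e., which forces the averages of `u_n` to tend to `0`.
-/

open MeasureTheory Filter Finset Topology

section Ergodic

variable {X : Type*} {T : X → X}

section BirkhoffAverage

variable {g h : X → ℝ} {C : ℝ}

theorem birkhoffSum_indicator {M : Type*} [AddCommMonoid M] {g : X → M} {E : Set X}
    (hTE : T ⁻¹' E = E) (n : ℕ) :
    birkhoffSum T (E.indicator g) n = E.indicator (birkhoffSum T g n) := by
  have hmem : ∀ k x, T^[k] x ∈ E ↔ x ∈ E := fun k x => by
    rw [← Set.mem_preimage, Set.preimage_iterate_eq, Function.iterate_fixed hTE]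
  ext x
  by_cases hx : x ∈ E <;> simp [birkhoffSum, Set.indicator, hmem, hx]

theorem birkhoffAverage_nonneg (hg : ∀ y, 0 ≤ g y) (n : ℕ) (x : X) :
    0 ≤ birkhoffAverage ℝ T g n x :=
  smul_nonneg (by positivity) (sum_nonneg fun _ _ => hg _)

theorem abs_birkhoffAverage_le_birkhoffAverage (hgh : ∀ y, |g y| ≤ h y) (n : ℕ) (x : X) :
    |birkhoffAverage ℝ T g n x| ≤ birkhoffAverage ℝ T h n x := by
  simp only [birkhoffAverage, birkhoffSum, smul_eq_mul, abs_mul, abs_inv, Nat.abs_cast]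
  gcongr
  exact (abs_sum_le_sum_abs _ _).trans (sum_le_sum fun _ _ => hgh _)

theorem abs_birkhoffAverage_le (hC : ∀ y, |g y| ≤ C) (n : ℕ) (x : X) :
    |birkhoffAverage ℝ T g n x| ≤ C := by
  refine (abs_birkhoffAverage_le_birkhoffAverage hC n x).trans ?_
  rcases eq_or_ne n 0 with rfl | hn
  · simpa using (abs_nonneg _).trans (hC x)
  · rw [birkhoffAverage_of_comp_eq ℝ rfl (Nat.cast_ne_zero.2 hn)]

theorem isBoundedUnder_le_birkhoffAverage (hC : ∀ y, |g y| ≤ C) (x : X) :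
    IsBoundedUnder (· ≤ ·) atTop (birkhoffAverage ℝ T g · x) :=
  isBoundedUnder_of ⟨C, fun n => (abs_le.1 (abs_birkhoffAverage_le hC n x)).2⟩

theorem isBoundedUnder_ge_birkhoffAverage (hC : ∀ y, |g y| ≤ C) (x : X) :
    IsBoundedUnder (· ≥ ·) atTop (birkhoffAverage ℝ T g · x) :=
  isBoundedUnder_of ⟨-C, fun n => (abs_le.1 (abs_birkhoffAverage_le hC n x)).1⟩

theorem tendsto_birkhoffAverage_apply_sub_of_abs_le (hC : ∀ y, |g y| ≤ C) (x : X) :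
    Tendsto (fun n => birkhoffAverage ℝ T g n (T x) - birkhoffAverage ℝ T g n x)
      atTop (𝓝 0) :=
  tendsto_birkhoffAverage_apply_sub_birkhoffAverage' ℝ
    (isBounded_iff_forall_norm_le.2 ⟨C, by rintro _ ⟨y, rfl⟩; exact hC y⟩) T x

theorem tendsto_birkhoffAverage_apply_of_tendsto (hC : ∀ y, |g y| ≤ C) {x : X} {L : ℝ}
    (h : Tendsto (birkhoffAverage ℝ T g · x) atTop (𝓝 L)) :
    Tendsto (birkhoffAverage ℝ T g · (T x)) atTop (𝓝 L) := by
  simpa using (tendsto_birkhoffAverage_apply_sub_of_abs_le (T := T) hC x).add h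

theorem inv_mul_sum_Icc_iterate_eq_birkhoffAverage (T : X → X) (g : X → ℝ) (n : ℕ) (x : X) :
    (n : ℝ)⁻¹ * ∑ i ∈ Icc 1 n, g (T^[i] x) = birkhoffAverage ℝ T g n (T x) := by
  rw [birkhoffAverage, birkhoffSum, smul_eq_mul, ← Ico_add_one_right_eq_Icc,
    sum_Ico_eq_sum_range, Nat.add_sub_cancel]
  simp only [add_comm 1, Function.iterate_succ_apply]

end BirkhoffAverage

theorem limsup_eq_of_tendsto_sub {ι : Type*} {l : Filter ι} [l.NeBot] {u v : ι → ℝ} {C : ℝ}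
    (hu : ∀ i, |u i| ≤ C) (hv : ∀ i, |v i| ≤ C) (h : Tendsto (u - v) l (𝓝 0)) :
    limsup u l = limsup v l := by
  have key : ∀ u v : ι → ℝ, (∀ i, |v i| ≤ C) → Tendsto (u - v) l (𝓝 0) →
      limsup u l ≤ limsup v l := fun u v hv h => by
    have hv_le : IsBoundedUnder (· ≤ ·) l v :=
      isBoundedUnder_of ⟨C, fun i => (abs_le.1 (hv i)).2⟩
    have hv_ge : IsBoundedUnder (· ≥ ·) l v :=
      isBoundedUnder_of ⟨-C, fun i => (abs_le.1 (hv i)).1⟩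
    calc limsup u l = limsup (v + (u - v)) l := by rw [add_sub_cancel]
      _ ≤ limsup v l + limsup (u - v) l :=
        limsup_add_le hv_ge hv_le h.isBoundedUnder_ge.isCoboundedUnder_le h.isBoundedUnder_le
      _ = limsup v l := by rw [h.limsup_eq, add_zero]
  exact le_antisymm (key u v hv h) (key v u hu (by simpa [Pi.sub_def] using h.neg))

noncomputable def birkhoffLimsup (T : X → X) (f : X → ℝ) (x : X) : ℝ :=
  limsup (birkhoffAverage ℝ T f · x) atTop

section BirkhoffLimsup

variable {f : X → ℝ} {C : ℝ}

theorem birkhoffLimsup_apply (hC : ∀ y, |f y| ≤ C) (x : X) :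
    birkhoffLimsup T f (T x) = birkhoffLimsup T f x :=
  limsup_eq_of_tendsto_sub (abs_birkhoffAverage_le hC · _) (abs_birkhoffAverage_le hC · _)
    (tendsto_birkhoffAverage_apply_sub_of_abs_le hC x)

theorem abs_birkhoffLimsup_le (hC : ∀ y, |f y| ≤ C) (x : X) : |birkhoffLimsup T f x| ≤ C :=
  abs_le.2 ⟨le_limsup_of_frequently_le
      (.of_forall fun n => (abs_le.1 (abs_birkhoffAverage_le hC n x)).1)
      (isBoundedUnder_le_birkhoffAverage hC x),
    limsup_le_of_le (isBoundedUnder_ge_birkhoffAverage hC x).isCoboundedUnder_le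
      (.of_forall fun n => (abs_le.1 (abs_birkhoffAverage_le hC n x)).2)⟩

theorem birkhoffLimsup_nonneg (hf : ∀ y, 0 ≤ f y) (hC : ∀ y, |f y| ≤ C) (x : X) :
    0 ≤ birkhoffLimsup T f x :=
  le_limsup_of_frequently_le (.of_forall (birkhoffAverage_nonneg hf · x))
    (isBoundedUnder_le_birkhoffAverage hC x)

end BirkhoffLimsup

noncomputable def tailSup (a : ℕ → ℝ) (N : ℕ) : ℝ := ⨆ m, |a (N + m)|

section TailSup

variable {a : ℕ → ℝ} {C : ℝ}

theorem tailSup_nonneg (a : ℕ → ℝ) (N : ℕ) : 0 ≤ tailSup a N :=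
  Real.iSup_nonneg fun _ => abs_nonneg _

theorem tailSup_le (hC : ∀ n, |a n| ≤ C) (N : ℕ) : tailSup a N ≤ C :=
  Real.iSup_le (fun _ => hC _) ((abs_nonneg _).trans (hC 0))

theorem abs_le_tailSup (hC : ∀ n, |a n| ≤ C) {N n : ℕ} (hNn : N ≤ n) :
    |a n| ≤ tailSup a N := by
  obtain ⟨m, rfl⟩ := Nat.exists_eq_add_of_le hNn
  exact le_ciSup (f := fun m => |a (N + m)|) ⟨C, by rintro _ ⟨m, rfl⟩; exact hC _⟩ m

theorem tendsto_tailSup_zero (ha : Tendsto a atTop (𝓝 0)) :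
    Tendsto (tailSup a) atTop (𝓝 0) := by
  refine tendsto_order.2 ⟨fun b hb => .of_forall fun N => hb.trans_le (tailSup_nonneg a N),
    fun b hb => ?_⟩
  obtain ⟨N₀, hN₀⟩ :=
    eventually_atTop.1 ((tendsto_order.1 ha.abs).2 (b / 2) (by simpa using half_pos hb))
  refine eventually_atTop.2 ⟨N₀, fun N hN => ?_⟩
  have : tailSup a N ≤ b / 2 :=
    Real.iSup_le (fun m => (hN₀ (N + m) (by omega)).le) (by linarith)
  linarith

end TailSup

noncomputable def maxBirkhoffSum (T : X → X) (g : X → ℝ) (n : ℕ) : X → ℝ :=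
  (range (n + 1)).sup' nonempty_range_add_one (birkhoffSum T g)

section MaxBirkhoffSum

variable {g : X → ℝ}

theorem birkhoffSum_le_maxBirkhoffSum {k n : ℕ} (hk : k ≤ n) (x : X) :
    birkhoffSum T g k x ≤ maxBirkhoffSum T g n x := by
  rw [maxBirkhoffSum, Finset.sup'_apply]
  exact le_sup' (fun k => birkhoffSum T g k x) (mem_range_succ_iff.2 hk)

theorem maxBirkhoffSum_nonneg (n : ℕ) (x : X) : 0 ≤ maxBirkhoffSum T g n x := by
  simpa using birkhoffSum_le_maxBirkhoffSum (T := T) (g := g) n.zero_le x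

theorem exists_birkhoffSum_eq_maxBirkhoffSum (n : ℕ) (x : X) :
    ∃ k ≤ n, birkhoffSum T g k x = maxBirkhoffSum T g n x := by
  obtain ⟨k, hk, heq⟩ :=
    exists_mem_eq_sup' nonempty_range_add_one (fun k => birkhoffSum T g k x)
  exact ⟨k, mem_range_succ_iff.1 hk, by rw [maxBirkhoffSum, Finset.sup'_apply, heq]⟩

theorem monotone_maxBirkhoffSum (x : X) : Monotone (maxBirkhoffSum T g · x) := fun m n hmn => by
  obtain ⟨k, hk, heq⟩ := exists_birkhoffSum_eq_maxBirkhoffSum (T := T) (g := g) m x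
  simpa only [heq] using birkhoffSum_le_maxBirkhoffSum (T := T) (g := g) (hk.trans hmn) x

theorem maxBirkhoffSum_le_add_apply {n : ℕ} {x : X} (hpos : 0 < maxBirkhoffSum T g n x) :
    maxBirkhoffSum T g n x ≤ g x + maxBirkhoffSum T g n (T x) := by
  obtain ⟨k, hk, heq⟩ := exists_birkhoffSum_eq_maxBirkhoffSum (T := T) (g := g) n x
  rw [← heq] at hpos ⊢
  cases k with
  | zero => simp at hpos
  | succ k =>
    rw [birkhoffSum_succ']
    gcongr
    exact birkhoffSum_le_maxBirkhoffSum (by omega) _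

end MaxBirkhoffSum

section Measure

variable [MeasurableSpace X] {μ : Measure X}

theorem MeasureTheory.MeasurePreserving.integral_comp_of_aestronglyMeasurable {Y E : Type*}
    [MeasurableSpace Y] [NormedAddCommGroup E] [NormedSpace ℝ E] {ν : Measure Y} {φ : X → Y}
    {g : Y → E} (hφ : MeasurePreserving φ μ ν) (hg : AEStronglyMeasurable g ν) :
    ∫ x, g (φ x) ∂μ = ∫ y, g y ∂ν := by
  rw [← integral_map hφ.measurable.aemeasurable (hφ.map_eq.symm ▸ hg), hφ.map_eq]

theorem measurable_birkhoffSum {M : Type*} [AddCommMonoid M] [MeasurableSpace M]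
    [MeasurableAdd₂ M] {g : X → M} (hT : Measurable T) (hg : Measurable g) (n : ℕ) :
    Measurable (birkhoffSum T g n) :=
  Finset.measurable_sum _ fun k _ => hg.comp (hT.iterate k)

theorem measurable_birkhoffAverage {g : X → ℝ} (hT : Measurable T) (hg : Measurable g)
    (n : ℕ) : Measurable (birkhoffAverage ℝ T g n) :=
  (measurable_birkhoffSum hT hg n).const_smul ((n : ℝ)⁻¹)

theorem integrable_birkhoffSum {E : Type*} [NormedAddCommGroup E] {g : X → E}
    (hT : MeasurePreserving T μ μ) (hg : Integrable g μ) (n : ℕ) :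
    Integrable (birkhoffSum T g n) μ :=
  integrable_finsetSum _ fun k _ => (hT.iterate k).integrable_comp_of_integrable hg

theorem integral_birkhoffAverage {f : X → ℝ} (hT : MeasurePreserving T μ μ)
    (hf : Integrable f μ) {n : ℕ} (hn : n ≠ 0) :
    ∫ x, birkhoffAverage ℝ T f n x ∂μ = ∫ x, f x ∂μ := by
  simp only [birkhoffAverage, birkhoffSum, smul_eq_mul]
  rw [integral_const_mul, integral_finsetSum (f := fun k x => f (T^[k] x)) _
    fun k _ => (hT.iterate k).integrable_comp_of_integrable hf]
  simp only [(hT.iterate _).integral_comp_of_aestronglyMeasurable hf.1]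
  rw [sum_const, card_range, nsmul_eq_mul, inv_mul_cancel_left₀ (Nat.cast_ne_zero.2 hn)]

section Maximal

variable {g : X → ℝ}

theorem measurable_maxBirkhoffSum (hT : Measurable T) (hg : Measurable g) (n : ℕ) :
    Measurable (maxBirkhoffSum T g n) :=
  Finset.measurable_sup' _ fun k _ => measurable_birkhoffSum hT hg k

theorem integrable_maxBirkhoffSum (hT : MeasurePreserving T μ μ) (hg : Integrable g μ)
    (n : ℕ) : Integrable (maxBirkhoffSum T g n) μ :=
  sup'_induction (p := (Integrable · μ)) _ _ (fun _ h₁ _ h₂ => h₁.sup h₂)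
    fun k _ => integrable_birkhoffSum hT hg k

theorem setIntegral_maxBirkhoffSum_pos_nonneg (hT : MeasurePreserving T μ μ)
    (hgm : Measurable g) (hg : Integrable g μ) (n : ℕ) :
    0 ≤ ∫ x in {x | 0 < maxBirkhoffSum T g n x}, g x ∂μ := by
  set M := maxBirkhoffSum T g n
  set A := {x | 0 < M x}
  have hA : MeasurableSet A :=
    measurableSet_lt measurable_const (measurable_maxBirkhoffSum hT.measurable hgm n)
  have hM : Integrable M μ := integrable_maxBirkhoffSum hT hg n
  have hMT : Integrable (fun x => M (T x)) μ := hT.integrable_comp_of_integrable hM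
  calc 0 = ∫ x, M x ∂μ - ∫ x, M (T x) ∂μ := by
        rw [hT.integral_comp_of_aestronglyMeasurable hM.1, sub_self]
    _ ≤ ∫ x in A, M x ∂μ - ∫ x in A, M (T x) ∂μ := by
        refine sub_le_sub (setIntegral_eq_integral_of_forall_compl_eq_zero fun x hx =>
          le_antisymm (not_lt.1 hx) (maxBirkhoffSum_nonneg n x)).ge ?_
        exact setIntegral_le_integral hMT (.of_forall fun x => maxBirkhoffSum_nonneg n (T x))
    _ = ∫ x in A, (M x - M (T x)) ∂μ := (integral_sub hM.integrableOn hMT.integrableOn).symm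
    _ ≤ ∫ x in A, g x ∂μ :=
        setIntegral_mono_on (hM.integrableOn.sub hMT.integrableOn) hg.integrableOn hA
          fun x hx => by linarith [maxBirkhoffSum_le_add_apply (T := T) (g := g) hx]

/-- The maximal ergodic theorem. -/
theorem setIntegral_setOf_exists_birkhoffSum_pos_nonneg (hT : MeasurePreserving T μ μ)
    (hgm : Measurable g) (hg : Integrable g μ) :
    0 ≤ ∫ x in {x | ∃ n, 0 < birkhoffSum T g n x}, g x ∂μ := by
  have hunion :
      ⋃ n, {x | 0 < maxBirkhoffSum T g n x} = {x | ∃ n, 0 < birkhoffSum T g n x} := by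
    ext x
    simp only [Set.mem_iUnion, Set.mem_ofPred_eq]
    constructor
    · rintro ⟨n, hn⟩
      obtain ⟨k, -, heq⟩ := exists_birkhoffSum_eq_maxBirkhoffSum (T := T) (g := g) n x
      exact ⟨k, heq ▸ hn⟩
    · rintro ⟨n, hn⟩
      exact ⟨n, hn.trans_le (birkhoffSum_le_maxBirkhoffSum le_rfl x)⟩
  rw [← hunion]
  refine ge_of_tendsto' (tendsto_setIntegral_of_monotone (fun n => ?_) (fun m n hmn x hx => ?_)
    hg.integrableOn) (setIntegral_maxBirkhoffSum_pos_nonneg hT hgm hg)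
  · exact measurableSet_lt measurable_const (measurable_maxBirkhoffSum hT.measurable hgm n)
  · exact hx.trans_le (monotone_maxBirkhoffSum x hmn)

end Maximal

section Pointwise

variable {f : X → ℝ} {C : ℝ}

theorem measurable_birkhoffLimsup (hT : Measurable T) (hf : Measurable f) :
    Measurable (birkhoffLimsup T f) :=
  Measurable.limsup fun n => measurable_birkhoffAverage hT hf n

theorem mul_measureReal_le_setIntegral_of_frequently_lt (hT : MeasurePreserving T μ μ)
    (hfm : Measurable f) (hf : Integrable f μ) [IsFiniteMeasure μ] {E : Set X}
    (hE : MeasurableSet E) (hTE : T ⁻¹' E = E) {b : ℝ}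
    (hfreq : ∀ x ∈ E, ∃ᶠ n in atTop, b < birkhoffAverage ℝ T f n x) :
    b * μ.real E ≤ ∫ x in E, f x ∂μ := by
  set g := E.indicator (fun x => f x - b)
  have hsum : ∀ n, birkhoffSum T g n = E.indicator (fun x => birkhoffSum T f n x - n * b) := by
    intro n
    rw [birkhoffSum_indicator hTE]
    congr 1
    ext x
    simp [birkhoffSum, sum_sub_distrib]
  have hset : {x | ∃ n, 0 < birkhoffSum T g n x} = E := by
    ext x
    simp only [hsum, Set.mem_ofPred_eq]
    refine ⟨fun ⟨n, hn⟩ => by_contra fun hx => by simp [hx] at hn, fun hx => ?_⟩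
    obtain ⟨n, hb, hn⟩ := ((hfreq x hx).and_eventually (eventually_gt_atTop 0)).exists
    refine ⟨n, ?_⟩
    rw [Set.indicator_of_mem hx, sub_pos, ← lt_inv_mul_iff₀ (by positivity)]
    simpa [birkhoffAverage] using hb
  have hmax : 0 ≤ ∫ x in {x | ∃ n, 0 < birkhoffSum T g n x}, g x ∂μ :=
    setIntegral_setOf_exists_birkhoffSum_pos_nonneg hT
      ((hfm.sub measurable_const).indicator hE) ((hf.sub (integrable_const b)).indicator hE)
  rw [hset, setIntegral_indicator hE, Set.inter_self,
    integral_sub hf.integrableOn (integrableOn_const (measure_ne_top μ E)), setIntegral_const,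
    smul_eq_mul] at hmax
  linarith

theorem measure_neg_lt_birkhoffLimsup_neg_and_lt_birkhoffLimsup_eq_zero
    (hT : MeasurePreserving T μ μ) (hfm : Measurable f) (hC : ∀ y, |f y| ≤ C)
    [IsFiniteMeasure μ] {a b : ℝ} (hab : a < b) :
    μ {x | -a < birkhoffLimsup T (-f) x ∧ b < birkhoffLimsup T f x} = 0 := by
  have hC' : ∀ y, |(-f) y| ≤ C := by simpa using hC
  have hf : Integrable f μ := .of_bound hfm.aestronglyMeasurable C (.of_forall hC)
  set E := {x | -a < birkhoffLimsup T (-f) x ∧ b < birkhoffLimsup T f x}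
  have hE : MeasurableSet E :=
    (measurableSet_lt measurable_const (measurable_birkhoffLimsup hT.measurable hfm.neg)).inter
      (measurableSet_lt measurable_const (measurable_birkhoffLimsup hT.measurable hfm))
  have hTE : T ⁻¹' E = E := by
    ext x
    simp [E, birkhoffLimsup_apply hC, birkhoffLimsup_apply hC']
  have hupper := mul_measureReal_le_setIntegral_of_frequently_lt hT hfm hf hE hTE fun x hx =>
    frequently_lt_of_lt_limsup (isBoundedUnder_ge_birkhoffAverage hC x).isCoboundedUnder_le hx.2
  have hlower := mul_measureReal_le_setIntegral_of_frequently_lt hT hfm.neg hf.neg hE hTE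
    fun x hx =>
      frequently_lt_of_lt_limsup (isBoundedUnder_ge_birkhoffAverage hC' x).isCoboundedUnder_le hx.1
  simp only [Pi.neg_apply, integral_neg] at hlower
  have : μ.real E ≤ 0 := by nlinarith
  exact (measureReal_eq_zero_iff).1 (le_antisymm this measureReal_nonneg)

/-- `-birkhoffLimsup T (-f)` is the liminf of the Birkhoff averages of `f`. -/
theorem ae_birkhoffLimsup_le_neg_birkhoffLimsup_neg (hT : MeasurePreserving T μ μ)
    (hfm : Measurable f) (hC : ∀ y, |f y| ≤ C) [IsFiniteMeasure μ] :
    ∀ᵐ x ∂μ, birkhoffLimsup T f x ≤ -birkhoffLimsup T (-f) x := by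
  have hrat : ∀ᵐ x ∂μ, ∀ a b : ℚ, (a : ℝ) < b →
      ¬(-(a : ℝ) < birkhoffLimsup T (-f) x ∧ (b : ℝ) < birkhoffLimsup T f x) := by
    refine ae_all_iff.2 fun a => ae_all_iff.2 fun b => ?_
    rcases lt_or_ge (a : ℝ) b with hab | hab
    · filter_upwards [measure_eq_zero_iff_ae_notMem.1
        (measure_neg_lt_birkhoffLimsup_neg_and_lt_birkhoffLimsup_eq_zero hT hfm hC hab)]
        with x hx _ using hx
    · exact .of_forall fun x h => absurd h hab.not_gt
  filter_upwards [hrat] with x hx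
  by_contra! hlt
  obtain ⟨a, ha, hab⟩ := exists_rat_btwn hlt
  obtain ⟨b, hab', hb⟩ := exists_rat_btwn hab
  exact hx a b hab' ⟨by linarith, hb⟩

theorem ae_tendsto_birkhoffAverage (hT : MeasurePreserving T μ μ) (hfm : Measurable f)
    (hC : ∀ y, |f y| ≤ C) [IsFiniteMeasure μ] :
    ∀ᵐ x ∂μ, Tendsto (birkhoffAverage ℝ T f · x) atTop (𝓝 (birkhoffLimsup T f x)) := by
  have hC' : ∀ y, |(-f) y| ≤ C := by simpa using hC
  filter_upwards [ae_birkhoffLimsup_le_neg_birkhoffLimsup_neg hT hfm hC] with x hx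
  refine tendsto_order.2 ⟨fun a ha => ?_, fun a ha =>
    eventually_lt_of_limsup_lt ha (isBoundedUnder_le_birkhoffAverage hC x)⟩
  have hlt : birkhoffLimsup T (-f) x < -a := by linarith
  filter_upwards [eventually_lt_of_limsup_lt hlt (isBoundedUnder_le_birkhoffAverage hC' x)]
    with n hn
  rw [birkhoffAverage_neg, Pi.neg_apply, Pi.neg_apply] at hn
  linarith

theorem ae_tendsto_birkhoffAverage_apply (hT : MeasurePreserving T μ μ) (hfm : Measurable f)
    (hC : ∀ y, |f y| ≤ C) [IsFiniteMeasure μ] :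
    ∀ᵐ x ∂μ, Tendsto (birkhoffAverage ℝ T f · (T x)) atTop
      (𝓝 (birkhoffLimsup T f x)) :=
  (ae_tendsto_birkhoffAverage hT hfm hC).mono fun _ => tendsto_birkhoffAverage_apply_of_tendsto hC

theorem integral_birkhoffLimsup (hT : MeasurePreserving T μ μ) (hfm : Measurable f)
    (hC : ∀ y, |f y| ≤ C) [IsFiniteMeasure μ] :
    ∫ x, birkhoffLimsup T f x ∂μ = ∫ x, f x ∂μ := by
  have hf : Integrable f μ := .of_bound hfm.aestronglyMeasurable C (.of_forall hC)
  refine tendsto_nhds_unique (tendsto_integral_of_dominated_convergence (fun _ => C)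
    (fun n => (measurable_birkhoffAverage hT.measurable hfm n).aestronglyMeasurable)
    (integrable_const C) (fun n => .of_forall fun x => abs_birkhoffAverage_le hC n x)
    (ae_tendsto_birkhoffAverage hT hfm hC)) ?_
  exact tendsto_const_nhds.congr'
    ((eventually_ne_atTop 0).mono fun n hn => (integral_birkhoffAverage hT hf hn).symm)

end Pointwise

theorem exists_seq_ae_tendsto_zero_of_tendsto_integral {F : ℕ → X → ℝ}
    (hF : ∀ N, Integrable (F N) μ) (hnn : ∀ N x, 0 ≤ F N x)
    (h : Tendsto (fun N => ∫ x, F N x ∂μ) atTop (𝓝 0)) :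
    ∃ ns : ℕ → ℕ, ∀ᵐ x ∂μ, Tendsto (fun k => F (ns k) x) atTop (𝓝 0) := by
  have hnorm : ∀ N, eLpNorm (F N) 1 μ = ENNReal.ofReal (∫ x, F N x ∂μ) := fun N => by
    rw [eLpNorm_one_eq_lintegral_enorm, ← ofReal_integral_norm_eq_lintegral_enorm (hF N)]
    simp_rw [Real.norm_of_nonneg (hnn N _)]
  have hmeas : TendstoInMeasure μ F atTop 0 :=
    tendstoInMeasure_of_tendsto_eLpNorm one_ne_zero (fun N => (hF N).1) aestronglyMeasurable_const
      (by simpa [hnorm] using ENNReal.tendsto_ofReal h)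
  obtain ⟨ns, -, hns⟩ := hmeas.exists_seq_tendsto_ae
  exact ⟨ns, hns⟩

theorem ae_tendsto_birkhoffAverage_of_ae_tendsto_zero [IsFiniteMeasure μ]
    (hT : MeasurePreserving T μ μ) {u : ℕ → X → ℝ} {C : ℝ}
    (hu : ∀ n, Measurable (u n)) (hC : ∀ n x, |u n x| ≤ C)
    (h0 : ∀ᵐ x ∂μ, Tendsto (u · x) atTop (𝓝 0)) :
    ∀ᵐ x ∂μ, Tendsto (fun n => birkhoffAverage ℝ T (u n) n x) atTop (𝓝 0) := by
  set H : ℕ → X → ℝ := fun N x => tailSup (u · x) N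
  have hHm : ∀ N, Measurable (H N) := fun N => Measurable.iSup fun m => (hu (N + m)).abs
  have hHnn : ∀ N x, 0 ≤ H N x := fun N x => tailSup_nonneg _ N
  have hHC : ∀ N x, |H N x| ≤ C := fun N x => by
    rw [abs_of_nonneg (hHnn N x)]
    exact tailSup_le (hC · x) N
  obtain ⟨ns, hns⟩ : ∃ ns : ℕ → ℕ,
      ∀ᵐ x ∂μ, Tendsto (fun k => birkhoffLimsup T (H (ns k)) x) atTop (𝓝 0) := by
    refine exists_seq_ae_tendsto_zero_of_tendsto_integral
      (F := fun N => birkhoffLimsup T (H N)) (fun N => ?_)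
      (fun N => birkhoffLimsup_nonneg (hHnn N) (hHC N)) ?_
    · exact .of_bound (measurable_birkhoffLimsup hT.measurable (hHm N)).aestronglyMeasurable C
        (.of_forall (abs_birkhoffLimsup_le (hHC N)))
    · simp only [integral_birkhoffLimsup hT (hHm _) (hHC _)]
      simpa using tendsto_integral_of_dominated_convergence (fun _ => C)
        (fun N => (hHm N).aestronglyMeasurable) (integrable_const C)
        (fun N => .of_forall (hHC N)) (h0.mono fun x hx => tendsto_tailSup_zero hx)
  have hH : ∀ᵐ x ∂μ, ∀ N,
      Tendsto (birkhoffAverage ℝ T (H N) · x) atTop (𝓝 (birkhoffLimsup T (H N) x)) :=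
    ae_all_iff.2 fun N => ae_tendsto_birkhoffAverage hT (hHm N) (hHC N)
  filter_upwards [hns, hH] with x hxK hxH
  refine NormedAddGroup.tendsto_nhds_zero.2 fun ε hε => ?_
  obtain ⟨k, hk⟩ := ((tendsto_order.1 hxK).2 ε hε).exists
  filter_upwards [(tendsto_order.1 (hxH (ns k))).2 ε hk, eventually_ge_atTop (ns k)] with n hn hNn
  exact (abs_birkhoffAverage_le_birkhoffAverage
    (fun y => abs_le_tailSup (hC · y) hNn) n x).trans_lt hn

theorem ae_tendsto_birkhoffAverage_birkhoffAverage [IsFiniteMeasure μ] {S : X → X}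
    (hT : MeasurePreserving T μ μ) (hS : MeasurePreserving S μ μ) {f : X → ℝ} {C : ℝ}
    (hf : Measurable f) (hC : ∀ y, |f y| ≤ C) :
    ∀ᵐ x ∂μ, Tendsto
      (fun n => birkhoffAverage ℝ T (fun y => birkhoffAverage ℝ S f n (S y)) n (T x))
      atTop (𝓝 (birkhoffLimsup T (birkhoffLimsup S f) x)) := by
  set fs := birkhoffLimsup S f
  have hfs : Measurable fs := measurable_birkhoffLimsup hS.measurable hf
  set u : ℕ → X → ℝ := fun n y => birkhoffAverage ℝ S f n (S y) - fs y
  have hu : ∀ n, (fun y => birkhoffAverage ℝ S f n (S y)) = u n + fs := fun n =>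
    funext fun y => (sub_add_cancel _ _).symm
  have hdiag :
      ∀ᵐ x ∂μ, Tendsto (fun n => birkhoffAverage ℝ T (u n) n (T x)) atTop (𝓝 0) :=
    hT.quasiMeasurePreserving.ae <| ae_tendsto_birkhoffAverage_of_ae_tendsto_zero hT
      (fun n => ((measurable_birkhoffAverage hS.measurable hf n).comp hS.measurable).sub hfs)
      (fun n y => (abs_sub _ _).trans
        (add_le_add (abs_birkhoffAverage_le hC n _) (abs_birkhoffLimsup_le hC y)))
      ((ae_tendsto_birkhoffAverage_apply hS hf hC).mono fun x hx => by
        simpa [fs] using hx.sub_const (fs x))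
  filter_upwards [hdiag, ae_tendsto_birkhoffAverage_apply hT hfs (abs_birkhoffLimsup_le hC)]
    with x hu0 hfs_lim
  simpa [hu, birkhoffAverage_add] using hu0.add hfs_lim

end Measure

end Ergodic

/-- Two-dimensional extension of Birkhoff's ergodic theorem: for two measure-preserving
maps `T, S` of a probability space and a bounded measurable `f`, almost surely the
Birkhoff limits `f_*` (for `S`), `f_**` (for `T` applied to `f_*`) exist, and the double
Cesàro average of `f (S^i (T^j x))` converges to `f_**(x)`. -/
theorem two_dimensional_birkhoff
    {X : Type*} [MeasurableSpace X] (P : Measure X) [IsProbabilityMeasure P]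
    (T S : X → X) (hT : MeasurePreserving T P P) (hS : MeasurePreserving S P P)
    (f : X → ℝ) (hf : Measurable f) (hbdd : ∃ M : ℝ, ∀ x, |f x| ≤ M) :
    ∃ fs fss : X → ℝ,
      ∀ᵐ x ∂P,
        Tendsto (fun n : ℕ => (n : ℝ)⁻¹ * ∑ i ∈ Finset.Icc 1 n, f (S^[i] x))
          atTop (nhds (fs x)) ∧
        Tendsto (fun n : ℕ => (n : ℝ)⁻¹ * ∑ j ∈ Finset.Icc 1 n, fs (T^[j] x))
          atTop (nhds (fss x)) ∧
        Tendsto (fun n : ℕ => (n : ℝ)⁻¹ * ∑ j ∈ Finset.Icc 1 n,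
            (n : ℝ)⁻¹ * ∑ i ∈ Finset.Icc 1 n, f (S^[i] (T^[j] x)))
          atTop (nhds (fss x)) := by
  obtain ⟨C, hC⟩ := hbdd
  refine ⟨birkhoffLimsup S f, birkhoffLimsup T (birkhoffLimsup S f), ?_⟩
  filter_upwards [ae_tendsto_birkhoffAverage_apply hS hf hC,
    ae_tendsto_birkhoffAverage_apply hT (measurable_birkhoffLimsup hS.measurable hf)
      (abs_birkhoffLimsup_le hC),
    ae_tendsto_birkhoffAverage_birkhoffAverage hT hS hf hC] with x hS_lim hT_lim hST_lim
  have houter : ∀ n : ℕ,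
      (n : ℝ)⁻¹ * ∑ j ∈ Icc 1 n, birkhoffAverage ℝ S f n (S (T^[j] x)) =
      birkhoffAverage ℝ T (fun y => birkhoffAverage ℝ S f n (S y)) n (T x) := fun n =>
    inv_mul_sum_Icc_iterate_eq_birkhoffAverage T (fun y => birkhoffAverage ℝ S f n (S y)) n x
  simp only [inv_mul_sum_Icc_iterate_eq_birkhoffAverage, houter]
  exact ⟨hS_lim, hT_lim, hST_lim⟩
end

section
/- Let λ < ρ be reals and G : ℝ → ℝ a continuous function. Then the set Σ of all v ∈ ℝ such that the minimum of the function r ↦ G(r) − v·r over the interval [λ, ρ] is attained at more than one point of [λ, ρ] is countable. -/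
/-- Monotone comparative statics: minimizers move up with `v`. -/
lemma minimizer_mono (lam rho : ℝ) (G : ℝ → ℝ) {v v' r r' : ℝ}
    (hvv : v < v') (hr : r ∈ Set.Icc lam rho) (hr' : r' ∈ Set.Icc lam rho)
    (h1 : IsMinOn (fun r => G r - v * r) (Set.Icc lam rho) r)
    (h2 : IsMinOn (fun r => G r - v' * r) (Set.Icc lam rho) r') : r ≤ r' := by
  have a1 : G r - v * r ≤ G r' - v * r' := h1 hr'
  have a2 : G r' - v' * r' ≤ G r - v' * r := h2 hr
  nlinarith

/-- For a continuous `G` and `lam < rho`, the set of `v` for which the minimum of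
`r ↦ G r - v * r` over `[lam, rho]` is attained at more than one point is countable. -/
theorem countable_nonunique_minimizers
    (lam rho : ℝ) (hlr : lam < rho) (G : ℝ → ℝ) (hG : Continuous G) :
    Set.Countable {v : ℝ | ∃ r₁ ∈ Set.Icc lam rho, ∃ r₂ ∈ Set.Icc lam rho, r₁ ≠ r₂ ∧
      IsMinOn (fun r => G r - v * r) (Set.Icc lam rho) r₁ ∧
      IsMinOn (fun r => G r - v * r) (Set.Icc lam rho) r₂} := by
  set S := {v : ℝ | ∃ r₁ ∈ Set.Icc lam rho, ∃ r₂ ∈ Set.Icc lam rho, r₁ ≠ r₂ ∧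
      IsMinOn (fun r => G r - v * r) (Set.Icc lam rho) r₁ ∧
      IsMinOn (fun r => G r - v * r) (Set.Icc lam rho) r₂} with hS
  -- For each v ∈ S, there exist minimizers a < b and a rational strictly between.
  have key : ∀ v ∈ S, ∃ q : ℚ, ∃ a b : ℝ, a ∈ Set.Icc lam rho ∧ b ∈ Set.Icc lam rho ∧
      IsMinOn (fun r => G r - v * r) (Set.Icc lam rho) a ∧
      IsMinOn (fun r => G r - v * r) (Set.Icc lam rho) b ∧
      a < (q : ℝ) ∧ (q : ℝ) < b := by
    intro v hv
    obtain ⟨r₁, h₁, r₂, h₂, hne, m₁, m₂⟩ := hv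
    rcases lt_or_gt_of_ne hne with h | h
    · obtain ⟨q, hq1, hq2⟩ := exists_rat_btwn h
      exact ⟨q, r₁, r₂, h₁, h₂, m₁, m₂, hq1, hq2⟩
    · obtain ⟨q, hq1, hq2⟩ := exists_rat_btwn h
      exact ⟨q, r₂, r₁, h₂, h₁, m₂, m₁, hq1, hq2⟩
  classical
  choose! F a b ha hb ma mb haq hqb using key
  apply Set.countable_of_injective_of_countable_image (f := F) ?_ (Set.to_countable _)
  intro v hv v' hv' hF
  by_contra hne
  rcases lt_or_gt_of_ne hne with h | h
  · have h1 : b v ≤ a v' :=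
      minimizer_mono lam rho G h (hb v hv) (ha v' hv') (mb v hv) (ma v' hv')
    have h2 := haq v' hv'
    have h3 := hqb v hv
    rw [← hF] at h2
    linarith
  · have h1 : b v' ≤ a v :=
      minimizer_mono lam rho G h (hb v' hv') (ha v hv) (mb v' hv') (ma v hv)
    have h2 := haq v hv
    have h3 := hqb v' hv'
    rw [hF] at h2
    linarith
end

section
/- Let λ < ρ be reals and G : ℝ → ℝ a continuous function. Define F : ℝ → ℝ by F(v) = min_{r ∈ [λ,ρ]} (G(r) − v·r) (the minimum exists by compactness and continuity). Let h : ℝ → ℝ be any function such that for every v ∈ ℝ, h(v) ∈ [λ, ρ] and G(h(v)) − v·h(v) ≤ G(r) − v·r for all r ∈ [λ, ρ]. Then for all v ≤ w, h is Lebesgue-integrable on [v, w] (it agrees outside a countable set with a measurable function) and F(w) − F(v) = − ∫_v^w h(x) dx. -/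
/-!
Since `h a` is a minimizer, `F b ≤ G (h a) - b * h a = F a - (b - a) * h a`: `-h a` is a
supergradient of `F` at `a`. Hence `F` is concave, so continuous, and `h` is monotone, so
integrable with countably many discontinuities. The difference quotients of `F` between `a` and `b`
lie between `-h a` and `-h b`, so `F` has derivative `-h a` wherever `h` is continuous, and the
fundamental theorem of calculus with a countable exceptional set concludes.
-/

open MeasureTheory Set Filter Topology

section Supergradient

variable {F h : ℝ → ℝ} (hsup : ∀ a b, F b ≤ F a - (b - a) * h a)
include hsup

theorem monotone_of_supergradient : Monotone h := by
  intro a b hab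
  rcases hab.eq_or_lt with rfl | hlt
  · rfl
  have hab' := hsup a b
  have hba := hsup b a
  exact le_of_mul_le_mul_left (by linarith) (sub_pos.2 hlt)

theorem concaveOn_univ_of_supergradient : ConcaveOn ℝ univ F := by
  refine ⟨convex_univ, fun x _ y _ a b ha hb hab => ?_⟩
  set z := a • x + b • y
  have hx := mul_le_mul_of_nonneg_left (hsup z x) ha
  have hy := mul_le_mul_of_nonneg_left (hsup z y) hb
  have hz : a * x + b * y = z := rfl
  simp only [smul_eq_mul] at hz ⊢
  linear_combination hx + hy + (F z + z * h z) * hab - h z * hz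

theorem slope_mem_uIcc_of_supergradient {x y : ℝ} (hyx : y ≠ x) :
    slope F x y ∈ uIcc (-h x) (-h y) := by
  rw [slope_def_field]
  rcases hyx.lt_or_gt with hyx | hxy
  · refine mem_uIcc_of_le ?_ ?_
    · rw [le_div_iff_of_neg (sub_neg.2 hyx)]; linarith [hsup x y]
    · rw [div_le_iff_of_neg (sub_neg.2 hyx)]; linarith [hsup y x]
  · refine mem_uIcc_of_ge ?_ ?_
    · rw [le_div_iff₀ (sub_pos.2 hxy)]; linarith [hsup y x]
    · rw [div_le_iff₀ (sub_pos.2 hxy)]; linarith [hsup x y]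

theorem hasDerivAt_of_supergradient {x : ℝ} (hx : ContinuousAt h x) :
    HasDerivAt F (-h x) x := by
  rw [hasDerivAt_iff_tendsto_slope, tendsto_iff_norm_sub_tendsto_zero]
  have hlim : Tendsto (fun y => |h y - h x|) (𝓝 x) (𝓝 0) := by
    simpa using (hx.tendsto.sub_const (h x)).abs
  refine squeeze_zero' (Eventually.of_forall fun _ => norm_nonneg _) ?_
    (hlim.mono_left nhdsWithin_le_nhds)
  filter_upwards [self_mem_nhdsWithin] with y hyx
  have hbound := abs_sub_left_of_mem_uIcc (slope_mem_uIcc_of_supergradient hsup hyx)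
  rwa [neg_sub_neg, abs_sub_comm (h x)] at hbound

theorem integral_eq_sub_of_supergradient {v w : ℝ} (hvw : v ≤ w) :
    F w - F v = -∫ x in v..w, h x := by
  rw [← intervalIntegral.integral_neg,
    integral_eq_of_hasDerivAt_off_countable_of_le F (fun x => -h x) hvw
    (monotone_of_supergradient hsup).countable_not_continuousAt
    (((concaveOn_univ_of_supergradient hsup).continuousOn isOpen_univ).mono (subset_univ _))
    (fun x hx => hasDerivAt_of_supergradient hsup (not_not.1 hx.2))
    (monotone_of_supergradient hsup).intervalIntegrable.neg]

end Supergradient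

theorem supergradient_of_isLeast_image {S : Set ℝ} {G F h : ℝ → ℝ}
    (hF : ∀ v, IsLeast ((fun r => G r - v * r) '' S) (F v)) (hmem : ∀ v, h v ∈ S)
    (hmin : ∀ v, ∀ r ∈ S, G (h v) - v * h v ≤ G r - v * r) (a b : ℝ) :
    F b ≤ F a - (b - a) * h a := by
  have hFa : F a = G (h a) - a * h a :=
    (hF a).unique ⟨⟨h a, hmem a, rfl⟩, by rintro _ ⟨r, hr, rfl⟩; exact hmin a r hr⟩
  have hFb : F b ≤ G (h a) - b * h a := (hF b).2 ⟨h a, hmem a, rfl⟩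
  linarith

theorem derivative_of_min_is_minus_minimizer_general
    (lam rho : ℝ) (G : ℝ → ℝ)
    (F : ℝ → ℝ)
    (hF : ∀ v : ℝ, IsLeast ((fun r => G r - v * r) '' Set.Icc lam rho) (F v))
    (h : ℝ → ℝ)
    (hmem : ∀ v : ℝ, h v ∈ Set.Icc lam rho)
    (hmin : ∀ v : ℝ, ∀ r ∈ Set.Icc lam rho, G (h v) - v * h v ≤ G r - v * r) :
    ∀ v w : ℝ, v ≤ w →
      IntervalIntegrable h volume v w ∧ F w - F v = - ∫ x in v..w, h x := by
  intro v w hvw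
  have hsup := supergradient_of_isLeast_image hF hmem hmin
  exact ⟨(monotone_of_supergradient hsup).intervalIntegrable,
    integral_eq_sub_of_supergradient hsup hvw⟩

/-- If `F v = min_{r ∈ [lam, rho]} (G r - v r)` and `h` is a selection of minimizers,
then `h` is interval-integrable and `F w - F v = -∫_v^w h(x) dx` for `v ≤ w`. -/
theorem derivative_of_min_is_minus_minimizer
    (lam rho : ℝ) (hlr : lam < rho) (G : ℝ → ℝ) (hG : Continuous G)
    (F : ℝ → ℝ)
    (hF : ∀ v : ℝ, IsLeast ((fun r => G r - v * r) '' Set.Icc lam rho) (F v))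
    (h : ℝ → ℝ)
    (hmem : ∀ v : ℝ, h v ∈ Set.Icc lam rho)
    (hmin : ∀ v : ℝ, ∀ r ∈ Set.Icc lam rho, G (h v) - v * h v ≤ G r - v * r) :
    ∀ v w : ℝ, v ≤ w →
      IntervalIntegrable h volume v w ∧ F w - F v = - ∫ x in v..w, h x :=
  derivative_of_min_is_minus_minimizer_general lam rho G F hF h hmem hmin
end

section
/- Let (Ω, 𝔉, P) be a probability space, M : Ω → ℝ a random variable, and C > 0, K > 0, t > 0 constants. Assume that for every θ ∈ ℝ, E[exp(θ M)] ≤ exp( C t ( e^{K|θ|} − 1 − K|θ| ) ). Define I_C(y) = (y/K)·log(1 + y/(C K)) − C·[ y/(C K) − log(1 + y/(C K)) ] for y ≥ 0. Then for every y ≥ 0, P( |M| ≥ t y ) ≤ 2 exp( − t I_C(y) ); moreover I_C(y) > 0 for every y > 0. -/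
/-!
Markov's inequality for `exp (θ M)` with `θ ≥ 0` gives
`P(M ≥ t y) ≤ exp (-θ t y + C t (e^{Kθ} - 1 - Kθ))`, and the minimising choice
`θ = log (1 + y/(CK)) / K` turns the exponent into `-t I_C(y)`. The moment bound depends on `θ`
only through `|θ|`, so `-M` satisfies the same bound, and the two tails add up to the factor `2`.
Positivity of the rate comes from `I_C(y) = C h(y/(CK))` with Bennett's function
`h(u) = (1 + u) log (1 + u) - u`, which is positive for `u > 0` since `log x > 1 - x⁻¹` for `x ≠ 1`.
-/

open MeasureTheory Real

/-- The Cramér/Chernoff rate function appearing in the large deviation bound. -/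
noncomputable def rateI (C K : ℝ) (y : ℝ) : ℝ :=
  y / K * Real.log (1 + y / (C * K)) - C * (y / (C * K) - Real.log (1 + y / (C * K)))

open ProbabilityTheory

noncomputable def bennett (u : ℝ) : ℝ := (1 + u) * log (1 + u) - u

lemma bennett_pos {u : ℝ} (hu : 0 < u) : 0 < bennett u := by
  have h1u : 0 < 1 + u := by linarith
  have hlog : -log (1 + u) < (1 + u)⁻¹ - 1 := by
    rw [← log_inv]
    exact log_lt_sub_one_of_pos (inv_pos.2 h1u) (inv_ne_one.2 (by linarith))
  have hmul := mul_lt_mul_of_pos_left hlog h1u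
  rw [mul_sub, mul_inv_cancel₀ h1u.ne'] at hmul
  unfold bennett
  linarith

lemma rateI_eq_mul_bennett {C K : ℝ} (hC : C ≠ 0) (hK : K ≠ 0) (y : ℝ) :
    rateI C K y = C * bennett (y / (C * K)) := by
  have hyK : y / K = C * (y / (C * K)) := by field_simp
  rw [rateI, bennett, hyK]
  ring

lemma rateI_pos {C K y : ℝ} (hC : 0 < C) (hK : 0 < K) (hy : 0 < y) : 0 < rateI C K y := by
  rw [rateI_eq_mul_bennett hC.ne' hK.ne']
  exact mul_pos hC (bennett_pos (by positivity))

lemma neg_mul_rateI_eq_chernoff_exponent {C K y θ : ℝ} (t : ℝ) (hK : K ≠ 0)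
    (hy : 0 < 1 + y / (C * K)) (hKθ : K * θ = log (1 + y / (C * K))) :
    -t * rateI C K y = -θ * (t * y) + C * t * (exp (K * θ) - 1 - K * θ) := by
  have hθ : θ = log (1 + y / (C * K)) / K := by rw [← hKθ, mul_div_cancel_left₀ _ hK]
  rw [hKθ, exp_log hy, rateI, hθ]
  field_simp
  ring

lemma measure_abs_ge_le_two_mul_exp {Ω : Type*} [MeasurableSpace Ω] {μ : Measure Ω}
    [IsFiniteMeasure μ] {X : Ω → ℝ} {θ B : ℝ} (a : ℝ) (hθ : 0 ≤ θ)
    (h_int : Integrable (fun ω => exp (θ * X ω)) μ)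
    (h_int_neg : Integrable (fun ω => exp (-θ * X ω)) μ)
    (h_mgf : mgf X μ θ ≤ exp B) (h_mgf_neg : mgf X μ (-θ) ≤ exp B) :
    μ {ω | a ≤ |X ω|} ≤ ENNReal.ofReal (2 * exp (-θ * a + B)) := by
  have upper : μ.real {ω | a ≤ X ω} ≤ exp (-θ * a + B) :=
    calc μ.real {ω | a ≤ X ω} ≤ exp (-θ * a) * mgf X μ θ := measure_ge_le_exp_mul_mgf a hθ h_int
      _ ≤ exp (-θ * a) * exp B := by gcongr
      _ = exp (-θ * a + B) := (exp_add _ _).symm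
  have lower : μ.real {ω | X ω ≤ -a} ≤ exp (-θ * a + B) :=
    calc μ.real {ω | X ω ≤ -a} ≤ exp (-(-θ) * -a) * mgf X μ (-θ) :=
          measure_le_le_exp_mul_mgf (-a) (neg_nonpos.2 hθ) h_int_neg
      _ ≤ exp (-(-θ) * -a) * exp B := by gcongr
      _ = exp (-θ * a + B) := by rw [← exp_add, neg_mul_neg]
  calc μ {ω | a ≤ |X ω|} ≤ μ ({ω | a ≤ X ω} ∪ {ω | X ω ≤ -a}) :=
        measure_mono fun ω (hω : a ≤ |X ω|) => show _ ∨ _ from (le_abs'.1 hω).symm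
    _ ≤ μ {ω | a ≤ X ω} + μ {ω | X ω ≤ -a} := measure_union_le _ _
    _ = ENNReal.ofReal (μ.real {ω | a ≤ X ω} + μ.real {ω | X ω ≤ -a}) := by
        rw [ENNReal.ofReal_add measureReal_nonneg measureReal_nonneg, ofReal_measureReal,
          ofReal_measureReal]
    _ ≤ ENNReal.ofReal (2 * exp (-θ * a + B)) := ENNReal.ofReal_le_ofReal (by linarith)

theorem chernoff_tail_bound_general
    {Ω : Type*} [MeasurableSpace Ω] (P : Measure Ω) [IsProbabilityMeasure P]
    (M : Ω → ℝ)
    (C K t : ℝ) (hC : 0 < C) (hK : 0 < K)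
    (hint : ∀ θ : ℝ, Integrable (fun ω => Real.exp (θ * M ω)) P)
    (hmgf : ∀ θ : ℝ, ∫ ω, Real.exp (θ * M ω) ∂P ≤
      Real.exp (C * t * (Real.exp (K * |θ|) - 1 - K * |θ|))) :
    (∀ y : ℝ, 0 ≤ y →
      P {ω | t * y ≤ |M ω|} ≤ ENNReal.ofReal (2 * Real.exp (-t * rateI C K y))) ∧
    (∀ y : ℝ, 0 < y → 0 < rateI C K y) := by
  refine ⟨fun y hy => ?_, fun y hy => rateI_pos hC hK hy⟩
  have hu : 0 ≤ y / (C * K) := by positivity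
  set θ := log (1 + y / (C * K)) / K
  have hθ : 0 ≤ θ := div_nonneg (log_nonneg (by linarith)) hK.le
  have h_mgf : ∀ s, |s| = θ → mgf M P s ≤ exp (C * t * (exp (K * θ) - 1 - K * θ)) := by
    intro s hs
    rw [← hs]
    exact hmgf s
  rw [neg_mul_rateI_eq_chernoff_exponent t hK.ne' (by linarith) (mul_div_cancel₀ _ hK.ne')]
  exact measure_abs_ge_le_two_mul_exp _ hθ (hint θ) (hint (-θ)) (h_mgf θ (abs_of_nonneg hθ))
    (h_mgf (-θ) ((abs_neg θ).trans (abs_of_nonneg hθ)))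

/-- Chernoff-type large deviation bound: an exponential-moment estimate of
compound-Poisson type implies a two-sided tail bound with rate function `rateI C K`,
which is positive for `y > 0`. -/
theorem chernoff_tail_bound
    {Ω : Type*} [MeasurableSpace Ω] (P : Measure Ω) [IsProbabilityMeasure P]
    (M : Ω → ℝ) (hM : Measurable M)
    (C K t : ℝ) (hC : 0 < C) (hK : 0 < K) (ht : 0 < t)
    (hint : ∀ θ : ℝ, Integrable (fun ω => Real.exp (θ * M ω)) P)
    (hmgf : ∀ θ : ℝ, ∫ ω, Real.exp (θ * M ω) ∂P ≤
      Real.exp (C * t * (Real.exp (K * |θ|) - 1 - K * |θ|))) :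
    (∀ y : ℝ, 0 ≤ y →
      P {ω | t * y ≤ |M ω|} ≤ ENNReal.ofReal (2 * Real.exp (-t * rateI C K y))) ∧
    (∀ y : ℝ, 0 < y → 0 < rateI C K y) :=
  chernoff_tail_bound_general P M C K t hC hK hint hmgf
end

section
/- Let K ∈ ℕ, n ∈ ℕ with n ≥ 1, and let η, ξ : ℤ → ℕ be finitely supported functions with η(x) ≤ K and ξ(x) ≤ K for all x ∈ ℤ and with equal total mass ∑_{x ∈ ℤ} η(x) = ∑_{x ∈ ℤ} ξ(x) = n. Let R, S : Fin n → ℤ be nondecreasing enumerations of the particles of η and ξ respectively, i.e., for every z ∈ ℤ, #{ i : R(i) ≤ z } = ∑_{y ≤ z} η(y) and #{ i : S(i) ≤ z } = ∑_{y ≤ z} ξ(y). Then for every z ∈ ℤ, | ∑_{y ≤ z} η(y) − ∑_{y ≤ z} ξ(y) | ≤ K · max_{i} | R(i) − S(i) |. -/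
/-- Auxiliary: the cumulative mass function grows by at most `K * M` over a window of
length `M`, when each site carries at most `K` particles. -/
lemma cumul_window_le (K : ℕ) (η : ℤ →₀ ℕ) (hηK : ∀ x : ℤ, η x ≤ K) (M : ℕ) (z : ℤ) :
    ∑ y ∈ η.support.filter (fun y => y ≤ z + (M : ℤ)), η y ≤
      (∑ y ∈ η.support.filter (fun y => y ≤ z), η y) + K * M := by
  classical
  set A := η.support.filter (fun y => y ≤ z) with hA
  set B := η.support.filter (fun y => y ≤ z + (M : ℤ)) with hB
  have hAB : A ⊆ B := by
    intro y hy
    simp only [hA, hB, Finset.mem_filter] at *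
    exact ⟨hy.1, by omega⟩
  have hsplit : ∑ y ∈ B, η y = (∑ y ∈ A, η y) + ∑ y ∈ B \ A, η y := by
    rw [← Finset.sum_sdiff hAB]; ring
  have hsub : B \ A ⊆ Finset.Icc (z + 1) (z + (M : ℤ)) := by
    intro y hy
    simp only [hA, hB, Finset.mem_sdiff, Finset.mem_filter, Finset.mem_Icc, not_and] at *
    obtain ⟨⟨hy1, hy2⟩, hy3⟩ := hy
    have := hy3 hy1
    omega
  have hcard : (B \ A).card ≤ M := by
    have := Finset.card_le_card hsub
    rwa [Int.card_Icc, show z + (M : ℤ) + 1 - (z + 1) = (M : ℤ) by ring, Int.toNat_natCast]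
      at this
  have hbound : ∑ y ∈ B \ A, η y ≤ K * M := by
    calc ∑ y ∈ B \ A, η y ≤ ∑ _y ∈ B \ A, K := Finset.sum_le_sum fun y _ => hηK y
      _ = (B \ A).card * K := by rw [Finset.sum_const, smul_eq_mul]
      _ ≤ M * K := Nat.mul_le_mul_right _ hcard
      _ = K * M := Nat.mul_comm _ _
  omega

/-- For two particle configurations on `ℤ` with at most `K` particles per site and the
same total number `n` of particles, with particles enumerated in nondecreasing order by
`R` and `S`, the sup-distance between the cumulative mass functions is bounded by `K`
times the maximal displacement between corresponding labeled particles. -/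
theorem cumulative_distance_le_K_mul_max_displacement
    (K n : ℕ) (hn : 1 ≤ n) (η ξ : ℤ →₀ ℕ)
    (hηK : ∀ x : ℤ, η x ≤ K) (hξK : ∀ x : ℤ, ξ x ≤ K)
    (hηn : ∑ x ∈ η.support, η x = n) (hξn : ∑ x ∈ ξ.support, ξ x = n)
    (R S : Fin n → ℤ)
    (hR : ∀ z : ℤ, (Finset.univ.filter (fun i => R i ≤ z)).card =
      ∑ y ∈ η.support.filter (fun y => y ≤ z), η y)
    (hS : ∀ z : ℤ, (Finset.univ.filter (fun i => S i ≤ z)).card =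
      ∑ y ∈ ξ.support.filter (fun y => y ≤ z), ξ y) :
    ∀ z : ℤ,
      |(∑ y ∈ η.support.filter (fun y => y ≤ z), (η y : ℤ)) -
        ∑ y ∈ ξ.support.filter (fun y => y ≤ z), (ξ y : ℤ)| ≤
      (K : ℤ) * (Finset.univ.sup fun i : Fin n => (R i - S i).natAbs) := by
  classical
  intro z
  set M : ℕ := Finset.univ.sup fun i : Fin n => (R i - S i).natAbs with hM
  have hdisp : ∀ i : Fin n, (R i - S i).natAbs ≤ M := fun i =>
    Finset.le_sup (f := fun i : Fin n => (R i - S i).natAbs) (Finset.mem_univ i)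
  -- one direction
  have key : ∀ (α β : ℤ →₀ ℕ) (P Q : Fin n → ℤ),
      (∀ x, α x ≤ K) →
      (∀ w : ℤ, (Finset.univ.filter (fun i => P i ≤ w)).card =
        ∑ y ∈ α.support.filter (fun y => y ≤ w), α y) →
      (∀ w : ℤ, (Finset.univ.filter (fun i => Q i ≤ w)).card =
        ∑ y ∈ β.support.filter (fun y => y ≤ w), β y) →
      (∀ i, (P i - Q i).natAbs ≤ M) →
      ∑ y ∈ β.support.filter (fun y => y ≤ z), β y ≤
        (∑ y ∈ α.support.filter (fun y => y ≤ z), α y) + K * M := by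
    intro α β P Q hαK hP hQ hPQ
    have hsubset : (Finset.univ.filter (fun i => Q i ≤ z)) ⊆
        (Finset.univ.filter (fun i => P i ≤ z + (M : ℤ))) := by
      intro i hi
      simp only [Finset.mem_filter, Finset.mem_univ, true_and] at *
      have h1 : (P i - Q i).natAbs ≤ M := hPQ i
      have h2 : P i - Q i ≤ (M : ℤ) := by
        have := Int.le_natAbs (a := P i - Q i)
        omega
      omega
    calc ∑ y ∈ β.support.filter (fun y => y ≤ z), β y
        = (Finset.univ.filter (fun i => Q i ≤ z)).card := (hQ z).symm
      _ ≤ (Finset.univ.filter (fun i => P i ≤ z + (M : ℤ))).card :=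
          Finset.card_le_card hsubset
      _ = ∑ y ∈ α.support.filter (fun y => y ≤ z + (M : ℤ)), α y := hP _
      _ ≤ (∑ y ∈ α.support.filter (fun y => y ≤ z), α y) + K * M :=
          cumul_window_le K α hαK M z
  have h1 := key η ξ R S hηK hR hS hdisp
  have h2 := key ξ η S R hξK hS hR (fun i => by
    have := hdisp i
    rw [← Int.natAbs_neg]
    simpa using this)
  rw [abs_sub_le_iff,
    show (∑ y ∈ η.support.filter (fun y => y ≤ z), (η y : ℤ)) =
      ((∑ y ∈ η.support.filter (fun y => y ≤ z), η y : ℕ) : ℤ) from (Nat.cast_sum _ _).symm,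
    show (∑ y ∈ ξ.support.filter (fun y => y ≤ z), (ξ y : ℤ)) =
      ((∑ y ∈ ξ.support.filter (fun y => y ≤ z), ξ y : ℕ) : ℤ) from (Nat.cast_sum _ _).symm]
  constructor <;> [skip; skip] <;>
    · zify at h1 h2
      push_cast
      omega
end

section
/- Let S be a finite set and q : S → S → ℝ a nonnegative function (transition rates). Define the Markov generator L on functions f : S → ℝ by (L f)(x) = ∑_{y ∈ S} q(x,y)·(f(y) − f(x)). Let μ : S → ℝ be a probability vector (μ ≥ 0, ∑_{x} μ(x) = 1). Then the following are equivalent: (a) for every function f : S → ℝ, ∑_{x ∈ S} μ(x) · L(exp ∘ f)(x) / exp(f(x)) ≥ 0; (b) μ is invariant for L, i.e., ∑_{x ∈ S} μ(x) · (L f)(x) = 0 for every f : S → ℝ. -/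
open Finset Real

lemma exp_le_one_add_add_sq {s : ℝ} (hs : |s| ≤ 1) : Real.exp s ≤ 1 + s + s ^ 2 := by
  have h := Real.exp_bound hs (n := 2) (by norm_num)
  have h2 : ∑ m ∈ Finset.range 2, s ^ m / (Nat.factorial m) = 1 + s := by
    simp [Finset.sum_range_succ]
  rw [h2] at h
  have h3 := (abs_le.mp h).2
  have hb : |s| ^ 2 = s ^ 2 := sq_abs s
  rw [hb] at h3
  norm_num [Nat.factorial] at h3
  nlinarith [sq_nonneg s]

/-- For a Markov generator `L` on a finite state space and a probability vector `μ`, the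
Donsker–Varadhan functional vanishes at `μ` iff `μ` is invariant: nonnegativity of
`∑ x, μ x * L(e^f) x / e^(f x)` for all `f` is equivalent to `∑ x, μ x * L f x = 0`
for all `f`. -/
theorem donsker_varadhan_zero_iff_invariant
    {S : Type*} [Fintype S] (q : S → S → ℝ) (hq : ∀ x y, 0 ≤ q x y)
    (L : (S → ℝ) → S → ℝ)
    (hL : ∀ f x, L f x = ∑ y, q x y * (f y - f x))
    (μ : S → ℝ) (hμ0 : ∀ x, 0 ≤ μ x) (hμ1 : ∑ x, μ x = 1) :
    (∀ f : S → ℝ, 0 ≤ ∑ x, μ x * (L (fun y => Real.exp (f y)) x / Real.exp (f x))) ↔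
    (∀ f : S → ℝ, ∑ x, μ x * L f x = 0) := by
  have key : ∀ f : S → ℝ, ∑ x, μ x * (L (fun y => Real.exp (f y)) x / Real.exp (f x))
      = ∑ x, ∑ y, μ x * q x y * (Real.exp (f y - f x) - 1) := by
    intro f
    refine Finset.sum_congr rfl fun x _ => ?_
    rw [hL, Finset.sum_div, Finset.mul_sum]
    refine Finset.sum_congr rfl fun y _ => ?_
    rw [Real.exp_sub]
    have hex : Real.exp (f x) ≠ 0 := (Real.exp_pos _).ne'
    field_simp
  have keyL : ∀ f : S → ℝ, ∑ x, μ x * L f x = ∑ x, ∑ y, μ x * q x y * (f y - f x) := by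
    intro f
    refine Finset.sum_congr rfl fun x _ => ?_
    rw [hL, Finset.mul_sum]
    exact Finset.sum_congr rfl fun y _ => by ring
  constructor
  · intro h g
    by_contra hI
    set I := ∑ x, μ x * L g x with hIdef
    set C := ∑ x : S, ∑ y : S, μ x * q x y * (g y - g x) ^ 2 with hCdef
    have hC0 : 0 ≤ C :=
      Finset.sum_nonneg fun x _ => Finset.sum_nonneg fun y _ =>
        mul_nonneg (mul_nonneg (hμ0 x) (hq x y)) (sq_nonneg _)
    set M : ℝ := (∑ x : S, ∑ y : S, |g y - g x|) + 1 with hMdef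
    have hM1 : 1 ≤ M := by
      have : 0 ≤ ∑ x : S, ∑ y : S, |g y - g x| :=
        Finset.sum_nonneg fun x _ => Finset.sum_nonneg fun y _ => abs_nonneg _
      linarith
    have hMb : ∀ x y : S, |g y - g x| ≤ M := by
      intro x y
      have h1 : |g y - g x| ≤ ∑ y' : S, |g y' - g x| :=
        Finset.single_le_sum (f := fun y' => |g y' - g x|)
          (fun y' _ => abs_nonneg _) (Finset.mem_univ y)
      have h2 : (∑ y' : S, |g y' - g x|) ≤ ∑ x' : S, ∑ y' : S, |g y' - g x'| :=
        Finset.single_le_sum (f := fun x' => ∑ y' : S, |g y' - g x'|)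
          (fun x' _ => Finset.sum_nonneg fun y' _ => abs_nonneg _) (Finset.mem_univ x)
      linarith
    set D : ℝ := (C + 1) * M ^ 2 * (1 + |I|) with hDdef
    have hIpos : 0 < |I| := abs_pos.mpr hI
    have hD0 : 0 < D := by positivity
    set t : ℝ := -I / D with htdef
    have hts : ∀ x y : S, |t * (g y - g x)| ≤ 1 := by
      intro x y
      rw [abs_mul, htdef, abs_div, abs_neg, abs_of_pos hD0]
      rw [div_mul_eq_mul_div, div_le_one hD0]
      calc |I| * |g y - g x| ≤ (1 + |I|) * M := by
            apply mul_le_mul (by linarith) (hMb x y) (abs_nonneg _) (by positivity)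
        _ ≤ D := by
            rw [hDdef]
            have hMM : M ≤ M ^ 2 := by nlinarith
            nlinarith [mul_nonneg (abs_nonneg I) (sub_nonneg.mpr hMM),
              mul_nonneg (mul_nonneg hC0 (sq_nonneg M)) (abs_nonneg I),
              mul_nonneg hC0 (sq_nonneg M)]
    -- bound each term
    have hbound : ∑ x : S, ∑ y : S, μ x * q x y * (Real.exp (t * g y - t * g x) - 1)
        ≤ t * I + t ^ 2 * C := by
      have step : ∀ x y : S, μ x * q x y * (Real.exp (t * g y - t * g x) - 1)
          ≤ μ x * q x y * (t * (g y - g x) + (t * (g y - g x)) ^ 2) := by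
        intro x y
        apply mul_le_mul_of_nonneg_left _ (mul_nonneg (hμ0 x) (hq x y))
        have := exp_le_one_add_add_sq (hts x y)
        have heq : t * g y - t * g x = t * (g y - g x) := by ring
        rw [heq]
        linarith
      calc ∑ x : S, ∑ y : S, μ x * q x y * (Real.exp (t * g y - t * g x) - 1)
          ≤ ∑ x : S, ∑ y : S, μ x * q x y * (t * (g y - g x) + (t * (g y - g x)) ^ 2) :=
            Finset.sum_le_sum fun x _ => Finset.sum_le_sum fun y _ => step x y
        _ = t * (∑ x : S, ∑ y : S, μ x * q x y * (g y - g x))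
              + t ^ 2 * (∑ x : S, ∑ y : S, μ x * q x y * (g y - g x) ^ 2) := by
            rw [Finset.mul_sum, Finset.mul_sum, ← Finset.sum_add_distrib]
            refine Finset.sum_congr rfl fun x _ => ?_
            rw [Finset.mul_sum, Finset.mul_sum, ← Finset.sum_add_distrib]
            exact Finset.sum_congr rfl fun y _ => by ring
        _ = t * I + t ^ 2 * C := by rw [hIdef, keyL g, hCdef]
    have hpos := h (fun z => t * g z)
    rw [key] at hpos
    have hpos' : 0 ≤ t * I + t ^ 2 * C := le_trans hpos hbound
    -- derive contradiction
    have hCD : C < D := by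
      rw [hDdef]
      have h1M : (1:ℝ) ≤ M ^ 2 * (1 + |I|) := by nlinarith
      nlinarith [mul_le_mul_of_nonneg_left h1M (by linarith : (0:ℝ) ≤ C + 1)]
    have hI2 : 0 < I ^ 2 := by positivity
    have h5 : 0 ≤ (t * I + t ^ 2 * C) * D ^ 2 := mul_nonneg hpos' (by positivity)
    have h6 : (t * I + t ^ 2 * C) * D ^ 2 = I ^ 2 * (C - D) := by
      rw [htdef]; field_simp; ring
    nlinarith [mul_pos hI2 (sub_pos.mpr hCD)]
  · intro h f
    rw [key]
    have h0 : ∑ x : S, ∑ y : S, μ x * q x y * (f y - f x) = 0 := by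
      rw [← keyL f]; exact h f
    calc (0:ℝ) = ∑ x : S, ∑ y : S, μ x * q x y * (f y - f x) := h0.symm
      _ ≤ ∑ x : S, ∑ y : S, μ x * q x y * (Real.exp (f y - f x) - 1) := by
          refine Finset.sum_le_sum fun x _ => Finset.sum_le_sum fun y _ => ?_
          apply mul_le_mul_of_nonneg_left _ (mul_nonneg (hμ0 x) (hq x y))
          have := Real.add_one_le_exp (f y - f x)
          linarith
end
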